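/- arXiv:1401.6473 — 3 statements merged into one kernel-verified Lean document; each statement's English description precedes it below -/
import Mathlib

section
/- Let N ≥ 2, let t_1⋯t_p be an admissible block, and let (θ_i) be the generalized Thue–Morse sequence generated by t_1⋯t_p^+. For ℓ = ip + q with i ≥ 0 and 1 ≤ q ≤ p, one has θ_ℓ = t_q + τ_i(t̄_q − t_q) if 1 ≤ q < p, and θ_ℓ = t_p + τ_i(t̄_p − t_p) + (τ_{i+1} − τ_i) if q = p, where (τ_i)_{i≥0} is the classical Thue–Morse sequence (τ_i = parity of the number of 1's in the binary expansion of i) and c̄ = N−1−c. -/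
/-- Reflection of a block: each digit `c` becomes `N - 1 - c`. -/
def reflB (N : ℕ) (w : List ℕ) : List ℕ := w.map (fun c => N - 1 - c)

/-- The block `w` with its last digit incremented by one. -/
def plusB (w : List ℕ) : List ℕ := w.dropLast ++ [w.getLast! + 1]

/-- The `i`-th cyclic rotation of the block `w` (0-indexed). -/
def rotB (w : List ℕ) (i : ℕ) : List ℕ := w.drop i ++ w.take i

/-- The lexicographic inequalities defining admissibility of a block. -/
def AdmissibleIneq (N : ℕ) (w : List ℕ) : Prop :=
  ∀ i < w.length,
    reflB N w ≤ rotB w i ∧ plusB (w.drop i) ++ reflB N (w.take i) ≤ plusB w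

/-- An admissible block in `{0, …, N-1}`. -/
def Admissible (N : ℕ) (w : List ℕ) : Prop :=
  w ≠ [] ∧ (∀ c ∈ w, c < N) ∧ w.getLast! < N - 1 ∧ AdmissibleIneq N w

/-- Prefixes of the generalized Thue–Morse sequence generated by `plusB w`:
`gtmBlock N w n` is the prefix `θ_1 ⋯ θ_{2^n p}`. -/
def gtmBlock (N : ℕ) (w : List ℕ) : ℕ → List ℕ
  | 0 => plusB w
  | n + 1 => gtmBlock N w n ++ plusB (reflB N (gtmBlock N w n))

/-- The generalized Thue–Morse sequence generated by `plusB w`, 0-indexed: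
`gtm N w n = θ_{n+1}`. -/
def gtm (N : ℕ) (w : List ℕ) : ℕ → ℕ := fun n => (gtmBlock N w n).getD n 0

/-- Strict lexicographic order on infinite sequences of digits. -/
def seqLt (a b : ℕ → ℕ) : Prop := ∃ n, (∀ k < n, a k = b k) ∧ a n < b n

/-- Lexicographic order on infinite sequences of digits. -/
def seqLe (a b : ℕ → ℕ) : Prop := seqLt a b ∨ a = b

/-- Shift of a sequence by `k` places. -/
def shift (a : ℕ → ℕ) (k : ℕ) : ℕ → ℕ := fun n => a (n + k)

/-- The periodic sequence `w^∞` obtained by repeating the block `w`. -/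
def per (w : List ℕ) : ℕ → ℕ := fun n => w.getD (n % w.length) 0

/-- Reflection of an infinite sequence. -/
def reflSeq (N : ℕ) (a : ℕ → ℕ) : ℕ → ℕ := fun n => N - 1 - a n

/-- The classical Thue–Morse sequence: parity of the binary digit sum. -/
def tm (i : ℕ) : ℕ := (Nat.digits 2 i).sum % 2

/-- Number of length-`n` words appearing in sequences of `Z`. -/
noncomputable def wordCount (Z : Set (ℕ → ℕ)) (n : ℕ) : ℕ :=
  Set.ncard { u : List ℕ | u.length = n ∧ ∃ d ∈ Z, ∀ k < n, u.getD k 0 = d k }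

/-- `Z` has topological entropy `h`. -/
def hasEntropy (Z : Set (ℕ → ℕ)) (h : ℝ) : Prop :=
  Filter.Tendsto (fun n : ℕ => Real.log (wordCount Z n) / n) Filter.atTop (nhds h)

/-!
The prefix of length `2^(n+1) p` is the prefix `B` of length `2^n p` followed by the reflection
of `B` with its last digit incremented. For `j < 2^n` one has `tm (2^n + j) = 1 - tm j`, and
replacing `tm j` by `1 - tm j` turns `a + tm j * (N - 1 - 2a)` into `N - 1` minus it, so read in
`ℤ` the closed formula transforms exactly like the digits. The lone `+1` at the end of the
reflected half is matched by the carry `tm (2^(n+1)) = tm (2^n) = 1` in the last-digit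
correction term. Induction on `n` then gives the formula on every prefix.
-/

lemma digits_two_sum_two_pow_add {n i : ℕ} (h : i < 2 ^ n) :
    (Nat.digits 2 (2 ^ n + i)).sum = (Nat.digits 2 i).sum + 1 := by
  have hlen : (Nat.digits 2 i).length ≤ n := (Nat.digits_length_le_iff one_lt_two i).mpr h
  have := Nat.digits_append_zeroes_append_digits (b := 2) (k := n - (Nat.digits 2 i).length)
    (m := 1) (n := i) (by norm_num) one_pos
  rw [Nat.add_sub_cancel' hlen, mul_one, add_comm] at this
  rw [← this]
  simp

lemma tm_le_one (i : ℕ) : tm i ≤ 1 := by unfold tm; omega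

lemma tm_two_pow_add {n i : ℕ} (h : i < 2 ^ n) : tm (2 ^ n + i) = 1 - tm i := by
  unfold tm; rw [digits_two_sum_two_pow_add h]; omega

lemma tm_two_pow (n : ℕ) : tm (2 ^ n) = 1 := by
  simpa [tm] using tm_two_pow_add (n := n) (Nat.two_pow_pos n)

lemma tm_two_pow_add_succ {n i : ℕ} (h : i < 2 ^ n) :
    (tm (2 ^ n + i + 1) : ℤ) = 1 - tm (i + 1) + if i + 1 = 2 ^ n then 1 else 0 := by
  split_ifs with hi
  · rw [add_assoc, hi, ← two_mul, ← pow_succ', tm_two_pow, tm_two_pow]; norm_num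
  · rw [add_assoc, tm_two_pow_add (by omega), Nat.cast_sub (tm_le_one _)]; simp

lemma mul_add_add_one_eq_mul_iff {p r i m : ℕ} (hr : r < p) :
    i * p + r + 1 = m * p ↔ i + 1 = m ∧ r + 1 = p := by
  constructor
  · intro h
    have hlo : i < m := by
      by_contra! hm
      nlinarith [Nat.mul_le_mul_right p hm]
    have hhi : m ≤ i + 1 := by
      by_contra! hm
      nlinarith [Nat.mul_le_mul_right p hm]
    refine ⟨by omega, ?_⟩
    rw [show m = i + 1 by omega, add_mul, one_mul] at h
    omega
  · rintro ⟨rfl, rfl⟩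
    ring

lemma getLast!_eq_getD {l : List ℕ} (h : l ≠ []) : l.getLast! = l.getD (l.length - 1) 0 := by
  have := List.length_pos_iff.mpr h
  rw [List.getLast!_eq_getElem!, getElem!_pos l _ (by omega), List.getD_eq_getElem]

lemma length_plusB {l : List ℕ} (h : l ≠ []) : (plusB l).length = l.length := by
  have := List.length_pos_iff.mpr h
  rw [plusB, List.length_append, List.length_dropLast, List.length_singleton]
  omega

lemma getD_plusB {l : List ℕ} {j : ℕ} (hj : j < l.length) :
    (plusB l).getD j 0 = l.getD j 0 + if j + 1 = l.length then 1 else 0 := by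
  have hdl : l.dropLast.length = l.length - 1 := List.length_dropLast
  rw [plusB, List.getD_eq_getElem _ _ hj]
  split_ifs with hlast
  · rw [List.getD_append_right _ _ _ _ (by omega), show j - l.dropLast.length = 0 by omega,
      List.getD_cons_zero, List.getLast!_eq_getElem!, getElem!_pos l _ (by omega)]
    simp only [show l.length - 1 = j by omega]
  · rw [List.getD_append _ _ _ _ (by omega), List.getD_eq_getElem _ _ (by omega),
      List.getElem_dropLast, add_zero]

lemma length_reflB (N : ℕ) (l : List ℕ) : (reflB N l).length = l.length :=
  List.length_map _

lemma getD_reflB (N : ℕ) {l : List ℕ} {j : ℕ} (hj : j < l.length) :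
    (reflB N l).getD j 0 = N - 1 - l.getD j 0 := by
  rw [List.getD_eq_getElem _ _ (by rwa [length_reflB]), List.getD_eq_getElem _ _ hj]
  simp [reflB]

lemma length_gtmBlock (N : ℕ) {w : List ℕ} (h : w ≠ []) (n : ℕ) :
    (gtmBlock N w n).length = 2 ^ n * w.length := by
  induction n with
  | zero => simp [gtmBlock, length_plusB h]
  | succ n ih =>
    have hne : reflB N (gtmBlock N w n) ≠ [] := by
      rw [← List.length_pos_iff, length_reflB, ih]
      have := List.length_pos_iff.mpr h
      positivity
    rw [gtmBlock, List.length_append, length_plusB hne, length_reflB, ih, pow_succ]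
    ring

/-- The right-hand side of the closed formula for `θ_ℓ`, `ℓ = i p + q`, with `r = q - 1`. -/
def gtmFormula (N : ℕ) (w : List ℕ) (i r : ℕ) : ℤ :=
  w.getD r 0 + tm i * ((N : ℤ) - 1 - 2 * w.getD r 0)
    + if r + 1 = w.length then (tm (i + 1) : ℤ) - tm i else 0

section

variable {N : ℕ} {w : List ℕ}

lemma gtmFormula_le (hlt : ∀ c ∈ w, c < N) (hlast : w.getLast! < N - 1) (i : ℕ) {r : ℕ}
    (hr : r < w.length) : gtmFormula N w i r ≤ N - 1 := by
  have ha : w.getD r 0 < N := by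
    rw [List.getD_eq_getElem _ _ hr]
    exact hlt _ (List.getElem_mem hr)
  have ha_last : r + 1 = w.length → w.getD r 0 + 1 < N := by
    intro h
    rw [getLast!_eq_getD (List.ne_nil_of_length_pos (by omega)), show w.length - 1 = r by omega]
      at hlast
    omega
  rcases Nat.le_one_iff_eq_zero_or_eq_one.mp (tm_le_one i) with h0 | h0 <;>
  rcases Nat.le_one_iff_eq_zero_or_eq_one.mp (tm_le_one (i + 1)) with h1 | h1 <;>
  · simp only [gtmFormula, h0, h1]
    split_ifs <;> omega

lemma getD_gtmBlock (hlt : ∀ c ∈ w, c < N) (hlast : w.getLast! < N - 1) (n : ℕ) :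
    ∀ i < 2 ^ n, ∀ r < w.length,
      ((gtmBlock N w n).getD (i * w.length + r) 0 : ℤ) = gtmFormula N w i r := by
  induction n with
  | zero =>
    intro i hi r hr
    obtain rfl : i = 0 := by simpa using hi
    rw [gtmBlock, zero_mul, zero_add, getD_plusB hr]
    simp [gtmFormula, tm]
  | succ n ih =>
    intro i hi r hr
    have hne : w ≠ [] := List.ne_nil_of_length_pos (by omega)
    have hB := length_gtmBlock N hne n
    rw [gtmBlock]
    by_cases hi' : i < 2 ^ n
    · rw [List.getD_append _ _ _ _ (by nlinarith [Nat.mul_le_mul_right w.length hi']), ih i hi' r hr]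
    obtain ⟨j, rfl⟩ : ∃ j, i = 2 ^ n + j := ⟨i - 2 ^ n, by omega⟩
    have hj : j < 2 ^ n := by rw [pow_succ] at hi; omega
    have hk : j * w.length + r < (gtmBlock N w n).length := by
      rw [hB]; nlinarith [Nat.mul_le_mul_right w.length hj]
    rw [show (2 ^ n + j) * w.length + r = (gtmBlock N w n).length + (j * w.length + r) by
        rw [hB]; ring,
      List.getD_append_right _ _ _ _ (by omega), Nat.add_sub_cancel_left,
      getD_plusB (by rwa [length_reflB]), getD_reflB N hk, length_reflB, hB]
    simp only [mul_add_add_one_eq_mul_iff hr]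
    have hx := ih j hj r hr
    have hxN : (gtmBlock N w n).getD (j * w.length + r) 0 ≤ N - 1 := by
      have := gtmFormula_le hlt hlast j hr
      omega
    push_cast [Nat.cast_sub hxN, Nat.cast_sub (show 1 ≤ N by omega), hx]
    rw [gtmFormula, gtmFormula, tm_two_pow_add_succ hj, tm_two_pow_add hj,
      Nat.cast_sub (tm_le_one j)]
    split_ifs <;> first | (exfalso; omega) | ring

end

theorem stmt4_general (N : ℕ) (w : List ℕ) (hadm : Admissible N w) :
    ∀ i q : ℕ, 1 ≤ q → q ≤ w.length →
      (gtm N w (i * w.length + q - 1) : ℤ) =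
        (w.getD (q - 1) 0 : ℤ) + (tm i : ℤ) * ((N : ℤ) - 1 - 2 * (w.getD (q - 1) 0 : ℤ))
          + (if q = w.length then (tm (i + 1) : ℤ) - (tm i : ℤ) else 0) := by
  obtain ⟨-, hlt, hlast, -⟩ := hadm
  intro i q hq hqp
  rw [gtm, show i * w.length + q - 1 = i * w.length + (q - 1) by omega]
  have hi : i < 2 ^ (i * w.length + (q - 1)) := by
    have := Nat.le_mul_of_pos_right i (show 0 < w.length by omega)
    exact lt_of_le_of_lt (by omega) Nat.lt_two_pow_self
  rw [getD_gtmBlock hlt hlast _ i hi (q - 1) (by omega), gtmFormula, Nat.sub_add_cancel hq]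

/-- Lemma 4.6 — explicit formula for the generalized Thue–Morse
sequence in terms of the classical Thue–Morse sequence `tm`. -/
theorem stmt4 (N : ℕ) (hN : 2 ≤ N) (w : List ℕ) (hadm : Admissible N w) :
    ∀ i q : ℕ, 1 ≤ q → q ≤ w.length →
      (gtm N w (i * w.length + q - 1) : ℤ) =
        (w.getD (q - 1) 0 : ℤ) + (tm i : ℤ) * ((N : ℤ) - 1 - 2 * (w.getD (q - 1) 0 : ℤ))
          + (if q = w.length then (tm (i + 1) : ℤ) - (tm i : ℤ) else 0) :=
  stmt4_general N w hadm
end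

section
/- Let (η_i)_{i≥1} be a sequence in {0,...,N-1} and t_1⋯t_p a block with t_p < N-1 such that η_1⋯η_p = t_1⋯t_p^+, and for all n ≥ 0: η_{2^{n+1}p} = N − η_{2^n p} and η_{2^n p + k} = N−1−η_k for all 1 ≤ k < 2^n p. Then (η_i) equals the generalized Thue–Morse sequence generated by t_1⋯t_p^+, and conversely the generalized Thue–Morse sequence satisfies these recursions. -/
/-!
The prefix of length `2^(n+1) p` of the generalized Thue–Morse sequence is the prefix of length
`2^n p` followed by its reflection with the last digit incremented, and the two recursions say
exactly this position by position. They therefore determine `η` on `[2^n p, 2^(n+1) p)` from `η` on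
`[0, 2^n p)`, which gives uniqueness by induction on `n`. For the generalized Thue–Morse sequence
itself, the incremented reflected digit `(N - 1 - x) + 1` equals `N - x` only when `x ≤ N - 1`;
this holds because the last digit of every prefix of length `2^n p` stays in `[1, N - 1]`, which
starts from `t_p + 1 ≤ N - 1`.
-/

lemma plusB_length {u : List ℕ} (hu : u ≠ []) : (plusB u).length = u.length := by
  have := List.length_pos_iff.mpr hu
  simp only [plusB, List.length_append, List.length_dropLast, List.length_singleton]
  omega

lemma plusB_getD_of_lt {u : List ℕ} {j : ℕ} (hj : j + 1 < u.length) :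
    (plusB u).getD j 0 = u.getD j 0 := by
  have hj' : j < u.dropLast.length := by simp only [List.length_dropLast]; omega
  rw [plusB, List.getD_append _ _ _ _ hj', List.getD_eq_getElem _ 0 hj',
    List.getD_eq_getElem _ 0 (by omega), List.getElem_dropLast]

lemma plusB_getD_last {u : List ℕ} (hu : u ≠ []) :
    (plusB u).getD (u.length - 1) 0 = u.getD (u.length - 1) 0 + 1 := by
  have := List.length_pos_iff.mpr hu
  rw [plusB, List.getD_append_right _ _ _ _ (by simp), List.length_dropLast, Nat.sub_self,
    List.getLast!_eq_getElem!, getElem!_pos u _ (by omega), List.getD_eq_getElem u 0 (by omega)]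
  rfl

lemma reflB_length (N : ℕ) (u : List ℕ) : (reflB N u).length = u.length :=
  List.length_map _

lemma reflB_getD (N : ℕ) {u : List ℕ} {j : ℕ} (hj : j < u.length) :
    (reflB N u).getD j 0 = N - 1 - u.getD j 0 := by
  rw [List.getD_eq_getElem _ 0 (by rwa [reflB_length]), List.getD_eq_getElem _ 0 hj]
  simp only [reflB, List.getElem_map]

lemma List.IsPrefix.getD_eq {α : Type*} {l₁ l₂ : List α} (h : l₁ <+: l₂) {k : ℕ}
    (hk : k < l₁.length) (d : α) : l₁.getD k d = l₂.getD k d := by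
  obtain ⟨t, rfl⟩ := h
  exact (List.getD_append _ _ _ _ hk).symm

section GeneralizedThueMorse

variable {N : ℕ} {w : List ℕ}

lemma gtmBlock_length (hne : w ≠ []) (n : ℕ) :
    (gtmBlock N w n).length = 2 ^ n * w.length := by
  induction n with
  | zero => simp [gtmBlock, plusB_length hne]
  | succ n ih =>
    have hrefl_ne : reflB N (gtmBlock N w n) ≠ [] := by
      rw [← List.length_pos_iff, reflB_length, ih]
      exact Nat.mul_pos (Nat.two_pow_pos n) (List.length_pos_iff.mpr hne)
    rw [gtmBlock, List.length_append, plusB_length hrefl_ne, reflB_length, ih, pow_succ]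
    ring

lemma gtmBlock_prefix_of_le {m n : ℕ} (h : m ≤ n) : gtmBlock N w m <+: gtmBlock N w n := by
  induction n, h using Nat.le_induction with
  | base => exact List.prefix_refl _
  | succ n _ ih => exact ih.trans (List.prefix_append _ _)

lemma gtm_eq_getD_gtmBlock (hne : w ≠ []) {n k : ℕ} (hk : k < 2 ^ n * w.length) :
    gtm N w k = (gtmBlock N w n).getD k 0 := by
  have hk' : k < (gtmBlock N w k).length := by
    rw [gtmBlock_length hne]
    calc k < 2 ^ k := Nat.lt_two_pow_self
      _ ≤ 2 ^ k * w.length := Nat.le_mul_of_pos_right _ (List.length_pos_iff.mpr hne)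
  rw [← gtmBlock_length hne] at hk
  rcases le_total n k with h | h
  · exact ((gtmBlock_prefix_of_le h).getD_eq hk 0).symm
  · exact (gtmBlock_prefix_of_le h).getD_eq hk' 0

lemma gtm_two_pow_mul_add (hne : w ≠ []) {n k : ℕ} (hk : k < 2 ^ n * w.length) :
    gtm N w (2 ^ n * w.length + k) = (plusB (reflB N (gtmBlock N w n))).getD k 0 := by
  have hlen := gtmBlock_length (N := N) hne n
  have hdouble : 2 ^ (n + 1) * w.length = 2 * (2 ^ n * w.length) := by ring
  rw [gtm_eq_getD_gtmBlock hne (n := n + 1) (by omega), gtmBlock,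
    List.getD_append_right _ _ _ _ (by omega), hlen, Nat.add_sub_cancel_left]

lemma gtm_two_pow_mul_add_of_lt (hne : w ≠ []) {n k : ℕ} (hk : k + 1 < 2 ^ n * w.length) :
    gtm N w (2 ^ n * w.length + k) = N - 1 - gtm N w k := by
  have hlen := gtmBlock_length (N := N) hne n
  rw [gtm_two_pow_mul_add hne (by omega),
    plusB_getD_of_lt (by rwa [reflB_length, hlen]), reflB_getD N (by omega),
    gtm_eq_getD_gtmBlock hne (n := n) (by omega)]

lemma gtm_two_pow_succ_mul_sub_one_eq_add_one (hne : w ≠ []) (n : ℕ) :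
    gtm N w (2 ^ (n + 1) * w.length - 1) = N - 1 - gtm N w (2 ^ n * w.length - 1) + 1 := by
  have hlen := gtmBlock_length (N := N) hne n
  have hpos : 0 < 2 ^ n * w.length :=
    Nat.mul_pos (Nat.two_pow_pos n) (List.length_pos_iff.mpr hne)
  have hrefl_ne : reflB N (gtmBlock N w n) ≠ [] := by
    rw [← List.length_pos_iff, reflB_length, hlen]; exact hpos
  have hlast := plusB_getD_last hrefl_ne
  rw [reflB_length, hlen] at hlast
  have hidx : 2 ^ (n + 1) * w.length - 1 = 2 ^ n * w.length + (2 ^ n * w.length - 1) := by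
    rw [pow_succ, mul_right_comm]; omega
  rw [hidx, gtm_two_pow_mul_add hne (by omega), hlast, reflB_getD N (by omega),
    gtm_eq_getD_gtmBlock hne (n := n) (by omega)]

lemma gtm_two_pow_mul_sub_one_mem_Icc (hne : w ≠ []) (hlast : w.getLast! < N - 1) (n : ℕ) :
    gtm N w (2 ^ n * w.length - 1) ∈ Set.Icc 1 (N - 1) := by
  induction n with
  | zero =>
    have hp := List.length_pos_iff.mpr hne
    rw [pow_zero, one_mul, gtm_eq_getD_gtmBlock hne (n := 0) (by omega), gtmBlock,
      plusB_getD_last hne, List.getD_eq_getElem _ 0 (by omega), ← getElem!_pos w _ (by omega),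
      ← List.getLast!_eq_getElem!]
    constructor <;> omega
  | succ n ih =>
    rw [gtm_two_pow_succ_mul_sub_one_eq_add_one hne]
    obtain ⟨h1, h2⟩ := ih
    constructor <;> omega

lemma gtm_two_pow_succ_mul_sub_one (hne : w ≠ []) (hlast : w.getLast! < N - 1) (n : ℕ) :
    gtm N w (2 ^ (n + 1) * w.length - 1) = N - gtm N w (2 ^ n * w.length - 1) := by
  obtain ⟨h1, h2⟩ := gtm_two_pow_mul_sub_one_mem_Icc hne hlast n
  rw [gtm_two_pow_succ_mul_sub_one_eq_add_one hne]
  omega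

end GeneralizedThueMorse

structure SatisfiesGtmRecursions (N : ℕ) (w : List ℕ) (η : ℕ → ℕ) : Prop where
  init : ∀ k < w.length, η k = (plusB w).getD k 0
  double : ∀ n : ℕ, η (2 ^ (n + 1) * w.length - 1) = N - η (2 ^ n * w.length - 1)
  refl : ∀ n : ℕ, ∀ k, 1 ≤ k → k < 2 ^ n * w.length →
    η (2 ^ n * w.length + k - 1) = N - 1 - η (k - 1)

namespace SatisfiesGtmRecursions

variable {N : ℕ} {w : List ℕ} {η θ : ℕ → ℕ}

lemma eq_of_lt_two_pow_mul (hη : SatisfiesGtmRecursions N w η)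
    (hθ : SatisfiesGtmRecursions N w θ) (n : ℕ) :
    ∀ i < 2 ^ n * w.length, η i = θ i := by
  induction n with
  | zero =>
    intro i hi
    rw [pow_zero, one_mul] at hi
    rw [hη.init i hi, hθ.init i hi]
  | succ n ih =>
    intro i hi
    rcases lt_or_ge i (2 ^ n * w.length) with hlt | hge
    · exact ih i hlt
    obtain ⟨k, rfl⟩ := Nat.exists_eq_add_of_le hge
    rw [pow_succ, mul_right_comm] at hi
    rcases lt_or_ge (k + 1) (2 ^ n * w.length) with hk | hk
    · have hη' := hη.refl n (k + 1) le_add_self hk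
      have hθ' := hθ.refl n (k + 1) le_add_self hk
      simp only [← Nat.add_assoc, Nat.add_sub_cancel] at hη' hθ'
      rw [hη', hθ', ih k (by omega)]
    · have hidx : 2 ^ n * w.length + k = 2 ^ (n + 1) * w.length - 1 := by
        rw [pow_succ, mul_right_comm]; omega
      rw [hidx, hη.double, hθ.double, ih _ (by omega)]

lemma eq (hne : w ≠ []) (hη : SatisfiesGtmRecursions N w η)
    (hθ : SatisfiesGtmRecursions N w θ) : η = θ := by
  funext i
  refine hη.eq_of_lt_two_pow_mul hθ i i ?_
  calc i < 2 ^ i := Nat.lt_two_pow_self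
    _ ≤ 2 ^ i * w.length := Nat.le_mul_of_pos_right _ (List.length_pos_iff.mpr hne)

end SatisfiesGtmRecursions

lemma satisfiesGtmRecursions_gtm {N : ℕ} {w : List ℕ} (hne : w ≠ [])
    (hlast : w.getLast! < N - 1) : SatisfiesGtmRecursions N w (gtm N w) where
  init k hk := by
    rw [gtm_eq_getD_gtmBlock hne (n := 0) (by omega)]
    rfl
  double := gtm_two_pow_succ_mul_sub_one hne hlast
  refl n k hk1 hk := by
    obtain ⟨k, rfl⟩ := Nat.exists_eq_add_of_le' hk1
    simpa only [← Nat.add_assoc, Nat.add_sub_cancel] using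
      gtm_two_pow_mul_add_of_lt hne (by omega)

/-- Sequences are 0-indexed: the paper's `η_ℓ` is `η (ℓ - 1)`. -/
theorem stmt5_general (N : ℕ) (w : List ℕ) (hne : w ≠ [])
    (hlast : w.getLast! < N - 1)
    (η : ℕ → ℕ)
    (hinit : ∀ k < w.length, η k = (plusB w).getD k 0)
    (hdouble : ∀ n : ℕ, η (2 ^ (n + 1) * w.length - 1) = N - η (2 ^ n * w.length - 1))
    (hrefl : ∀ n : ℕ, ∀ k, 1 ≤ k → k < 2 ^ n * w.length →
      η (2 ^ n * w.length + k - 1) = N - 1 - η (k - 1)) :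
    η = gtm N w ∧
    (∀ k < w.length, gtm N w k = (plusB w).getD k 0) ∧
    (∀ n : ℕ, gtm N w (2 ^ (n + 1) * w.length - 1) = N - gtm N w (2 ^ n * w.length - 1)) ∧
    (∀ n : ℕ, ∀ k, 1 ≤ k → k < 2 ^ n * w.length →
      gtm N w (2 ^ n * w.length + k - 1) = N - 1 - gtm N w (k - 1)) := by
  have hgtm := satisfiesGtmRecursions_gtm hne hlast
  exact ⟨SatisfiesGtmRecursions.eq hne ⟨hinit, hdouble, hrefl⟩ hgtm, hgtm.init, hgtm.double,
    hgtm.refl⟩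

/-- characterization of the generalized Thue–Morse sequence by the
recursions `η_{2^{n+1}p} = N - η_{2^n p}` and `η_{2^n p + k} = N-1-η_k` for
`1 ≤ k < 2^n p` (sequences are 0-indexed, so `η_ℓ` is `η (ℓ-1)`). -/
theorem stmt5 (N : ℕ) (hN : 2 ≤ N) (w : List ℕ) (hne : w ≠ [])
    (hd : ∀ c ∈ w, c < N) (hlast : w.getLast! < N - 1)
    (η : ℕ → ℕ)
    (hinit : ∀ k < w.length, η k = (plusB w).getD k 0)
    (hdouble : ∀ n : ℕ, η (2 ^ (n + 1) * w.length - 1) = N - η (2 ^ n * w.length - 1))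
    (hrefl : ∀ n : ℕ, ∀ k, 1 ≤ k → k < 2 ^ n * w.length →
      η (2 ^ n * w.length + k - 1) = N - 1 - η (k - 1)) :
    η = gtm N w ∧
    (∀ k < w.length, gtm N w k = (plusB w).getD k 0) ∧
    (∀ n : ℕ, gtm N w (2 ^ (n + 1) * w.length - 1) = N - gtm N w (2 ^ n * w.length - 1)) ∧
    (∀ n : ℕ, ∀ k, 1 ≤ k → k < 2 ^ n * w.length →
      gtm N w (2 ^ n * w.length + k - 1) = N - 1 - gtm N w (k - 1)) :=
  stmt5_general N w hne hlast η hinit hdouble hrefl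
end

section
/- Let N ≥ 2 and let s_1⋯s_q and t_1⋯t_p be admissible blocks with q ≥ p. If (s_1⋯s_q)^∞ > (t_1⋯t_p)^∞ lexicographically, then s_1⋯s_p > t_1⋯t_p as length-p blocks (i.e., the first p digits of s already strictly exceed t_1⋯t_p). -/
/-!
Admissibility of `s` (the second family of inequalities) says that for `0 < j < q` the tail
`s_{j+1} ⋯ s_q` is smaller than `s_1 ⋯ s_{q-j}`: it is below its own `^+`, which is at most the
first `q - j` digits of `(s_1 ⋯ s_q)^+`. Hence no shift of `s^∞` exceeds `s^∞`.
If `t^∞ < s^∞` first differed at a position `n ≥ p`, then `p`-periodicity of `t^∞` would make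
`s^∞` shifted by `p` agree with `s^∞` before `n - p` and exceed it at `n - p`.
-/

theorem List.le_of_append_lt_append {α : Type*} [LinearOrder α] {u v x y : List α}
    (hlen : u.length = v.length) (h : u ++ x < v ++ y) : u ≤ v := by
  induction u generalizing v with
  | nil => cases v <;> simp_all
  | cons a u ih =>
    cases v with
    | nil => simp at hlen
    | cons b v =>
      rcases List.cons_lt_cons_iff.1 h with hab | ⟨rfl, htail⟩
      · exact (List.cons_lt_cons_iff.2 (Or.inl hab)).le
      · exact List.cons_le_cons a (ih (by simpa using hlen) htail)

theorem List.le_of_append_le_append {α : Type*} [LinearOrder α] {u v x y : List α}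
    (hlen : u.length = v.length) (h : u ++ x ≤ v ++ y) : u ≤ v := by
  rcases h.lt_or_eq with h | h
  · exact List.le_of_append_lt_append hlen h
  · exact (List.append_inj h hlen).1.le

theorem List.lt_of_lt_at {α : Type*} [LT α] {u v : List α} {n : ℕ} (hu : n < u.length)
    (hv : n < v.length) (hagree : ∀ k (hk : k < n), u[k] = v[k]) (hlt : u[n] < v[n]) :
    u < v :=
  List.lt_iff_exists.2 (Or.inr ⟨n, hu, hv, hagree, hlt⟩)

theorem length_plusB_s11 {w : List ℕ} (hw : w ≠ []) : (plusB w).length = w.length := by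
  have := List.length_pos_iff.2 hw
  simp only [plusB, List.length_append, List.length_dropLast, List.length_singleton]
  omega

theorem lt_plusB_self {w : List ℕ} (hw : w ≠ []) : w < plusB w := by
  have hlast : w.getLast! = w.getLast hw := by
    rw [List.getLast!_eq_getLast?_getD, List.getLast?_eq_some_getLast hw, Option.getD_some]
  conv_lhs => rw [← List.dropLast_concat_getLast hw]
  rw [plusB, hlast]
  exact List.append_left_lt (List.cons_lt_cons_iff.2 (Or.inl (Nat.lt_succ_self _)))

theorem take_plusB {w : List ℕ} {k : ℕ} (hk : k < w.length) : (plusB w).take k = w.take k := by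
  rw [plusB, List.take_append_of_le_length (by simp; omega), List.dropLast_eq_take,
    List.take_take, min_eq_left (by omega)]

theorem AdmissibleIneq.drop_lt_take {N : ℕ} {s : List ℕ} (hs : AdmissibleIneq N s) {j : ℕ}
    (hj0 : 0 < j) (hj : j < s.length) : s.drop j < s.take (s.length - j) := by
  have hdrop : s.drop j ≠ [] := by simp; omega
  have hprefix : plusB (s.drop j) ≤ s.take (s.length - j) := by
    rw [← take_plusB (by omega)]
    refine List.le_of_append_le_append (x := reflB N (s.take j))
      (y := (plusB s).drop (s.length - j)) ?_ ?_
    · rw [length_plusB_s11 hdrop, List.length_take, length_plusB_s11 (by rintro rfl; simp at hj)]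
      simp
    · rw [List.take_append_drop]
      exact (hs j hj).2
  exact (lt_plusB_self hdrop).trans_le hprefix

theorem per_of_lt {w : List ℕ} {k : ℕ} (hk : k < w.length) : per w k = w[k] := by
  rw [per, Nat.mod_eq_of_lt hk, List.getD_eq_getElem]

theorem periodic_per (w : List ℕ) : Function.Periodic (per w) w.length := by
  intro n
  simp only [per, Nat.add_mod_right]

theorem shift_per_mod (w : List ℕ) (m : ℕ) :
    shift (per w) (m % w.length) = shift (per w) m := by
  funext n
  simp only [shift, per, Nat.add_mod_mod]

theorem seqLt_iff_toLex_lt {a b : ℕ → ℕ} : seqLt a b ↔ toLex a < toLex b := Iff.rfl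

theorem seqLt_of_lt {u v : List ℕ} {a b : ℕ → ℕ} (huv : u < v) (hlen : u.length = v.length)
    (ha : ∀ k (hk : k < u.length), a k = u[k]) (hb : ∀ k (hk : k < v.length), b k = v[k]) :
    seqLt a b := by
  obtain ⟨-, hshorter⟩ | ⟨i, hiu, hiv, hagree, hlt⟩ := List.lt_iff_exists.1 huv
  · omega
  · refine ⟨i, fun k hk => ?_, ?_⟩
    · rw [ha k (by omega), hb k (by omega)]
      exact hagree k hk
    · rwa [ha i hiu, hb i hiv]

theorem AdmissibleIneq.seqLt_shift_per {N : ℕ} {s : List ℕ} (hs : AdmissibleIneq N s) {j : ℕ}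
    (hj0 : 0 < j) (hj : j < s.length) : seqLt (shift (per s) j) (per s) := by
  refine seqLt_of_lt (hs.drop_lt_take hj0 hj) (by simp) (fun k hk => ?_) (fun k hk => ?_)
  · rw [List.length_drop] at hk
    rw [shift, per_of_lt (by omega), List.getElem_drop]
    simp only [Nat.add_comm]
  · rw [List.length_take] at hk
    rw [per_of_lt (by omega), List.getElem_take]

theorem Admissible.not_seqLt_shift_per {N : ℕ} {s : List ℕ} (hs : Admissible N s) (m : ℕ) :
    ¬ seqLt (per s) (shift (per s) m) := by
  rw [← shift_per_mod, seqLt_iff_toLex_lt]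
  rcases Nat.eq_zero_or_pos (m % s.length) with hj0 | hj0
  · rw [hj0]
    exact lt_irrefl _
  · exact lt_asymm (seqLt_iff_toLex_lt.1
      (hs.2.2.2.seqLt_shift_per hj0 (Nat.mod_lt _ (List.length_pos_iff.2 hs.1))))

theorem Function.Periodic.lt_period_of_seqLt_at {a b : ℕ → ℕ} {p n : ℕ}
    (ha : Function.Periodic a p) (hp : 0 < p) (hb : ¬ seqLt b (shift b p))
    (hagree : ∀ k < n, a k = b k) (hlt : a n < b n) : n < p := by
  by_contra! hpn
  refine hb ⟨n - p, fun k hk => ?_, ?_⟩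
  · calc b k = a k := (hagree k (by omega)).symm
      _ = a (k + p) := (ha k).symm
      _ = b (k + p) := hagree _ (by omega)
  · calc b (n - p) = a (n - p) := (hagree _ (by omega)).symm
      _ = a n := by rw [← ha, Nat.sub_add_cancel hpn]
      _ < b n := hlt
      _ = shift b p (n - p) := by rw [shift, Nat.sub_add_cancel hpn]

theorem stmt11_general (N : ℕ) (s t : List ℕ)
    (hs : Admissible N s) (ht : Admissible N t) (hlen : t.length ≤ s.length)
    (h : seqLt (per t) (per s)) :
    t < s.take t.length := by
  obtain ⟨n, hagree, hlt⟩ := h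
  have hn : n < t.length := (periodic_per t).lt_period_of_seqLt_at
    (List.length_pos_iff.2 ht.1) (hs.not_seqLt_shift_per _) hagree hlt
  have hs_take : ∀ k (hk : k < t.length), per s k = (s.take t.length)[k]'(by simp; omega) :=
    fun k hk => by rw [per_of_lt (by omega), List.getElem_take]
  refine List.lt_of_lt_at hn (by simp; omega) (fun k hk => ?_) ?_
  · rw [← per_of_lt, hagree k hk, hs_take k (by omega)]
  · rwa [← per_of_lt, ← hs_take n hn]

/-- from the proof of Lemma 5.9 — for admissible blocks `s` and `t`
with `|s| ≥ |t|`, if `s^∞ > t^∞` then already `s_1⋯s_p > t_1⋯t_p`. -/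
theorem stmt11 (N : ℕ) (hN : 2 ≤ N) (s t : List ℕ)
    (hs : Admissible N s) (ht : Admissible N t) (hlen : t.length ≤ s.length)
    (h : seqLt (per t) (per s)) :
    t < s.take t.length :=
  stmt11_general N s t hs ht hlen h
end
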